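/- arXiv:2403.06562 — 3 statements merged into one kernel-verified Lean document; each statement's English description precedes it below -/
import Mathlib

section
/- Let n ≥ 3 be an integer. Then inf_{r ∈ (1,∞)} d(r)/δ(r) > 0; that is, there exists a constant c > 0 such that d(r) ≥ c·δ(r) for all r > 1. -/
open Filter

noncomputable def schR (n : ℕ) : ℝ := ((4 : ℝ) / 3) ^ (((n : ℝ) - 2)⁻¹)

/-- The weight function `δ` of the Schwarzschild Hardy inequality. -/
noncomputable def schDelta (n : ℕ) (r : ℝ) : ℝ :=
  if r < schR n then 2 * r ^ (n - 1) * Real.sqrt ((r ^ (n - 2) - 1) / r ^ (n - 2))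
  else 2 * r ^ (n - 1) * (1 - Real.sqrt ((r ^ (n - 2) - 1) / r ^ (n - 2)))

/-- The Riemannian distance from the event horizon:
`d(r) = ∫₁^r √(ξ^(n−2)/(ξ^(n−2)−1)) dξ`. -/
noncomputable def schDist (n : ℕ) (r : ℝ) : ℝ :=
  ∫ ξ in (1 : ℝ)..r, Real.sqrt (ξ ^ (n - 2) / (ξ ^ (n - 2) - 1))


/-! Write `m = n - 2`. Bernoulli's inequality gives `1 - ξ^(-m) ≤ m (ξ - 1)` for `ξ ≥ 1`, so the
integrand of `d` is at least `(m (ξ - 1))^(-1/2)` and `d(r) ≥ 2 √((r - 1) / m)`; the same inequality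
gives `δ(r) ≤ 2 R^(m+1) √(m (r - 1))` for `r < R`. For `r ≥ R`, `1 - √y ≤ 1 - y` gives `δ(r) ≤ 2 r`,
while the integrand is at least `1`, so `d(r) ≥ r - 1 ≥ (1 - 1/R) r` since `R > 1`. -/

open MeasureTheory

theorem sub_one_div_pow_le_mul_sub_one (m : ℕ) {x : ℝ} (hx : 1 ≤ x) :
    (x ^ m - 1) / x ^ m ≤ m * (x - 1) := by
  have hx0 : 0 < x := by linarith
  have hbernoulli : 1 + m * (x⁻¹ - 1) ≤ x⁻¹ ^ m := by
    simpa using one_add_mul_le_pow (a := x⁻¹ - 1) (by linarith [inv_pos.2 hx0]) m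
  have hinv : 1 - x⁻¹ ≤ x - 1 := by
    have : x⁻¹ ≤ 1 := inv_le_one_of_one_le₀ hx
    nlinarith [mul_inv_cancel₀ hx0.ne']
  calc (x ^ m - 1) / x ^ m = 1 - x⁻¹ ^ m := by
        rw [sub_div, div_self (pow_pos hx0 m).ne', one_div, inv_pow]
    _ ≤ m * (1 - x⁻¹) := by linarith
    _ ≤ m * (x - 1) := by gcongr

theorem rpow_neg_one_half_eq_inv_sqrt {x : ℝ} (hx : 0 ≤ x) : x ^ (-(1 / 2) : ℝ) = (√x)⁻¹ := by
  rw [Real.rpow_neg hx, Real.sqrt_eq_rpow]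

theorem intervalIntegrable_sub_one_rpow_neg_half (a b : ℝ) :
    IntervalIntegrable (fun ξ : ℝ => (ξ - 1) ^ (-(1 / 2) : ℝ)) volume a b := by
  simpa using (intervalIntegral.intervalIntegrable_rpow' (a := a - 1) (b := b - 1)
    (by norm_num : (-1 : ℝ) < -(1 / 2))).comp_sub_right 1

theorem integral_sub_one_rpow_neg_half (r : ℝ) :
    ∫ ξ in (1 : ℝ)..r, (ξ - 1) ^ (-(1 / 2) : ℝ) = 2 * √(r - 1) := by
  rw [intervalIntegral.integral_comp_sub_right (fun x : ℝ => x ^ (-(1 / 2) : ℝ)) 1,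
    integral_rpow (Or.inl (by norm_num)), Real.sqrt_eq_rpow]
  norm_num
  ring

noncomputable def schDensity (n : ℕ) (ξ : ℝ) : ℝ :=
  √(ξ ^ (n - 2) / (ξ ^ (n - 2) - 1))

section schDensity

variable {n : ℕ} {ξ : ℝ}

theorem one_le_schDensity (hn : 3 ≤ n) (hξ : 1 < ξ) : 1 ≤ schDensity n ξ := by
  have h : 1 < ξ ^ (n - 2) := one_lt_pow₀ hξ (by omega)
  exact Real.one_le_sqrt.2 ((one_le_div (by linarith)).2 (by linarith))

theorem inv_sqrt_mul_rpow_le_schDensity (hn : 3 ≤ n) (hξ : 1 < ξ) :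
    (√(n - 2 : ℕ))⁻¹ * (ξ - 1) ^ (-(1 / 2) : ℝ) ≤ schDensity n ξ := by
  have hpos : 0 < (ξ ^ (n - 2) - 1) / ξ ^ (n - 2) :=
    div_pos (by linarith [one_lt_pow₀ hξ (by omega : n - 2 ≠ 0)]) (by positivity)
  calc (√(n - 2 : ℕ))⁻¹ * (ξ - 1) ^ (-(1 / 2) : ℝ) = √(((n - 2 : ℕ) * (ξ - 1))⁻¹) := by
        rw [rpow_neg_one_half_eq_inv_sqrt (by linarith), Real.sqrt_inv,
          Real.sqrt_mul (Nat.cast_nonneg _), mul_inv]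
    _ ≤ √(((ξ ^ (n - 2) - 1) / ξ ^ (n - 2))⁻¹) :=
        Real.sqrt_le_sqrt (inv_anti₀ hpos (sub_one_div_pow_le_mul_sub_one _ hξ.le))
    _ = schDensity n ξ := by rw [inv_div, schDensity]

theorem schDensity_le (hn : 3 ≤ n) {r : ℝ} (hξ : 1 < ξ) (hξr : ξ ≤ r) :
    schDensity n ξ ≤ √(r ^ (n - 2)) * (ξ - 1) ^ (-(1 / 2) : ℝ) := by
  have hden : ξ - 1 ≤ ξ ^ (n - 2) - 1 := by
    linarith [le_self_pow₀ hξ.le (by omega : n - 2 ≠ 0)]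
  calc schDensity n ξ ≤ √(r ^ (n - 2) / (ξ - 1)) :=
        Real.sqrt_le_sqrt (div_le_div₀ (pow_nonneg (by linarith) _) (pow_le_pow_left₀ (by linarith) hξr _)
          (by linarith) hden)
    _ = √(r ^ (n - 2)) * (ξ - 1) ^ (-(1 / 2) : ℝ) := by
        rw [Real.sqrt_div' _ (by linarith), rpow_neg_one_half_eq_inv_sqrt (by linarith),
          div_eq_mul_inv]

theorem intervalIntegrable_schDensity (hn : 3 ≤ n) {r : ℝ} (hr : 1 ≤ r) :
    IntervalIntegrable (schDensity n) volume 1 r := by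
  refine ((intervalIntegrable_sub_one_rpow_neg_half 1 r).const_mul √(r ^ (n - 2))).mono_fun
    (show Measurable (schDensity n) by unfold schDensity; fun_prop).aestronglyMeasurable ?_
  refine ae_restrict_of_forall_mem measurableSet_uIoc fun ξ hξ => ?_
  rw [Set.uIoc_of_le hr] at hξ
  simp only [Real.norm_eq_abs]
  exact abs_le_abs_of_nonneg (Real.sqrt_nonneg _) (schDensity_le hn hξ.1 hξ.2)

end schDensity

section schDist

variable {n : ℕ} {r : ℝ}

theorem sub_one_le_schDist (hn : 3 ≤ n) (hr : 1 ≤ r) : r - 1 ≤ schDist n r := by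
  calc r - 1 = ∫ _ in (1 : ℝ)..r, (1 : ℝ) := by simp
    _ ≤ schDist n r := intervalIntegral.integral_mono_on_of_le_Ioo hr intervalIntegrable_const
        (intervalIntegrable_schDensity hn hr) fun ξ hξ => one_le_schDensity hn hξ.1

theorem two_div_sqrt_mul_sqrt_le_schDist (hn : 3 ≤ n) (hr : 1 ≤ r) :
    2 / √(n - 2 : ℕ) * √(r - 1) ≤ schDist n r := by
  calc 2 / √(n - 2 : ℕ) * √(r - 1)
        = ∫ ξ in (1 : ℝ)..r, (√(n - 2 : ℕ))⁻¹ * (ξ - 1) ^ (-(1 / 2) : ℝ) := by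
          rw [intervalIntegral.integral_const_mul, integral_sub_one_rpow_neg_half]; ring
    _ ≤ schDist n r := intervalIntegral.integral_mono_on_of_le_Ioo hr
        ((intervalIntegrable_sub_one_rpow_neg_half 1 r).const_mul _)
        (intervalIntegrable_schDensity hn hr) fun ξ hξ => inv_sqrt_mul_rpow_le_schDensity hn hξ.1

end schDist

theorem one_lt_schR {n : ℕ} (hn : 3 ≤ n) : 1 < schR n := by
  have : (3 : ℝ) ≤ n := by exact_mod_cast hn
  exact Real.one_lt_rpow (by norm_num) (inv_pos.2 (by linarith))

section schDelta

variable {n : ℕ} {r : ℝ}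

theorem schDelta_nonneg (hr : 0 ≤ r) : 0 ≤ schDelta n r := by
  have hy : √((r ^ (n - 2) - 1) / r ^ (n - 2)) ≤ 1 :=
    Real.sqrt_le_one.2 (div_le_one_of_le₀ (by linarith) (by positivity))
  unfold schDelta
  split_ifs
  · positivity
  · exact mul_nonneg (by positivity) (by linarith)

theorem schDelta_le_of_lt_schR (hr : 1 ≤ r) (hR : r < schR n) :
    schDelta n r ≤ 2 * schR n ^ (n - 1) * √(n - 2 : ℕ) * √(r - 1) := by
  have hsqrt : √((r ^ (n - 2) - 1) / r ^ (n - 2)) ≤ √(n - 2 : ℕ) * √(r - 1) := by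
    rw [← Real.sqrt_mul (Nat.cast_nonneg _)]
    exact Real.sqrt_le_sqrt (sub_one_div_pow_le_mul_sub_one _ hr)
  have hR0 : 0 ≤ schR n := by linarith
  rw [schDelta, if_pos hR, mul_assoc _ (√_)]
  gcongr

theorem schDelta_le_two_mul (hr : 1 ≤ r) (hR : schR n ≤ r) : schDelta n r ≤ 2 * r := by
  set y := (r ^ (n - 2) - 1) / r ^ (n - 2) with hy
  have hpow : 0 < r ^ (n - 2) := by positivity
  have hy0 : 0 ≤ y := div_nonneg (by linarith [one_le_pow₀ (n := n - 2) hr]) hpow.le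
  have hy1 : y ≤ 1 := div_le_one_of_le₀ (by linarith) hpow.le
  have hsqrt : y ≤ √y := (Real.le_sqrt hy0 hy0).2 (by nlinarith)
  have hone_sub : 1 - y = (r ^ (n - 2))⁻¹ := by rw [hy]; field_simp; ring
  have hr_pow : r ^ (n - 1) ≤ r * r ^ (n - 2) := by
    rw [← pow_succ']; exact pow_le_pow_right₀ hr (by omega)
  rw [schDelta, if_neg hR.not_gt]
  calc 2 * r ^ (n - 1) * (1 - √y) ≤ 2 * (r * r ^ (n - 2)) * (r ^ (n - 2))⁻¹ := by
        gcongr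
        · linarith [Real.sqrt_le_one.2 hy1]
        · linarith
    _ = 2 * r := by field_simp

end schDelta

/-- `inf_{r ∈ (1,∞)} d(r)/δ(r) > 0`; i.e. there exists `c > 0` with
`d(r) ≥ c·δ(r)` for all `r > 1`. -/
theorem schDist_div_schDelta_bddBelow (n : ℕ) (hn : 3 ≤ n) :
    ∃ c : ℝ, 0 < c ∧ ∀ r : ℝ, 1 < r → c * schDelta n r ≤ schDist n r := by
  set R := schR n
  have hR : 1 < R := one_lt_schR hn
  have hm : (0 : ℝ) < (n - 2 : ℕ) := by exact_mod_cast (by omega : 0 < n - 2)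
  set c₁ := (R ^ (n - 1) * (n - 2 : ℕ))⁻¹
  set c₂ := (R - 1) / (2 * R)
  refine ⟨min c₁ c₂, lt_min (by positivity) (div_pos (by linarith) (by positivity)),
    fun r hr => ?_⟩
  have hδ : 0 ≤ schDelta n r := schDelta_nonneg (by linarith)
  rcases lt_or_ge r R with hrR | hRr
  · calc min c₁ c₂ * schDelta n r ≤ c₁ * (2 * R ^ (n - 1) * √(n - 2 : ℕ) * √(r - 1)) :=
          mul_le_mul (min_le_left _ _) (schDelta_le_of_lt_schR hr.le hrR) hδ (by positivity)
      _ = 2 / √(n - 2 : ℕ) * √(r - 1) := by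
          have hRpow : R ^ (n - 1) ≠ 0 := by positivity
          have hsqrt : √(n - 2 : ℕ) ≠ 0 := (Real.sqrt_pos.2 hm).ne'
          simp only [c₁]
          field_simp
          rw [Real.sq_sqrt hm.le]
      _ ≤ schDist n r := two_div_sqrt_mul_sqrt_le_schDist hn hr.le
  · calc min c₁ c₂ * schDelta n r ≤ c₂ * (2 * r) :=
          mul_le_mul (min_le_right _ _) (schDelta_le_two_mul hr.le hRr) hδ (by positivity)
      _ ≤ r - 1 := by
          rw [div_mul_eq_mul_div, div_le_iff₀ (by positivity)]
          nlinarith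
      _ ≤ schDist n r := sub_one_le_schDist hn hr.le
end

section
/- Let n ≥ 3 be an integer. Then s(r) = (2/√(n−2)) √(r−1) + o(√(r−1)) as r → 1⁺ (i.e. (s(r) − (2/√(n−2))√(r−1))/√(r−1) → 0 as r → 1⁺), and s(r)/r → 1/n as r → ∞. -/
/-!
With `m = n - 2` the integrand is `f ξ = ξ ^ (m + 1) * √(1 + 1 / (ξ ^ m - 1))`. On `1 < ξ ≤ r`
the bounds `m (ξ - 1) ≤ ξ ^ m - 1 ≤ m r ^ m (ξ - 1)` and `√(1 + t) ≤ 1 + √t` give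
`ξ ^ (m + 1) ≤ f ξ`, `(m r ^ m (ξ - 1)) ^ (-1/2) ≤ f ξ` and
`f ξ ≤ ξ ^ (m + 1) + r ^ (m + 1) (m (ξ - 1)) ^ (-1/2)`. Integrating against
`∫₁^r (ξ - 1) ^ (-1/2) = 2 √(r - 1)`, the integral `∫₁^r f` is squeezed between
`(r ^ (m + 2) - 1) / (m + 2)`, resp. `2 √(r - 1) / √(m r ^ m)`, and
`(r ^ (m + 2) - 1) / (m + 2) + 2 r ^ (m + 1) √(r - 1) / √m`; after dividing by `√(r - 1)`,
resp. `r ^ (m + 2)`, both bounds converge to the same limit.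
-/

open Filter

/-- The induced distance from the event horizon:
`s(r) = r^(−(n−1)) ∫₁^r √(ξ^(n−2)/(ξ^(n−2)−1)) ξ^(n−1) dξ`. -/
noncomputable def schS (n : ℕ) (r : ℝ) : ℝ :=
  (∫ ξ in (1 : ℝ)..r, Real.sqrt (ξ ^ (n - 2) / (ξ ^ (n - 2) - 1)) * ξ ^ (n - 1)) / r ^ (n - 1)

open MeasureTheory Set Topology

noncomputable def schIntegrand (m : ℕ) (ξ : ℝ) : ℝ :=
  √(ξ ^ m / (ξ ^ m - 1)) * ξ ^ (m + 1)

lemma schS_add_two (m : ℕ) (r : ℝ) :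
    schS (m + 2) r = (∫ ξ in (1 : ℝ)..r, schIntegrand m ξ) / r ^ (m + 1) := rfl

lemma inv_sqrt_eq_rpow {x : ℝ} (hx : 0 ≤ x) : (√x)⁻¹ = x ^ (-(1 / 2) : ℝ) := by
  rw [Real.sqrt_eq_rpow, Real.rpow_neg hx]

lemma intervalIntegrable_inv_sqrt_sub {a b : ℝ} (hab : a ≤ b) :
    IntervalIntegrable (fun ξ => (√(ξ - a))⁻¹) volume a b := by
  have h := (intervalIntegral.intervalIntegrable_rpow' (a := 0) (b := b - a)
    (r := -(1 / 2)) (by norm_num)).comp_sub_right a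
  simp only [zero_add, sub_add_cancel] at h
  refine h.congr fun ξ hξ => ?_
  rw [uIoc_of_le hab] at hξ
  exact (inv_sqrt_eq_rpow (sub_nonneg.2 hξ.1.le)).symm

lemma integral_inv_sqrt_sub {a b : ℝ} (hab : a ≤ b) :
    ∫ ξ in a..b, (√(ξ - a))⁻¹ = 2 * √(b - a) := by
  rw [intervalIntegral.integral_comp_sub_right (fun x => (√x)⁻¹), sub_self,
    intervalIntegral.integral_congr (g := fun x => x ^ (-(1 / 2) : ℝ)) fun x hx => ?_,
    integral_rpow (Or.inl (by norm_num)), Real.zero_rpow (by norm_num), Real.sqrt_eq_rpow]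
  · norm_num; ring
  · rw [uIcc_of_le (sub_nonneg.2 hab)] at hx
    exact inv_sqrt_eq_rpow hx.1

lemma sqrt_div_sub_one_eq {y : ℝ} (hy : 1 < y) : √(y / (y - 1)) = √(1 + (√(y - 1))⁻¹ ^ 2) := by
  rw [inv_pow, Real.sq_sqrt (by linarith)]
  congr 1
  field_simp [show y - 1 ≠ 0 by linarith]
  ring

lemma one_le_sqrt_div_sub_one {y : ℝ} (hy : 1 < y) : 1 ≤ √(y / (y - 1)) := by
  rw [sqrt_div_sub_one_eq hy, Real.one_le_sqrt]
  nlinarith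

lemma inv_sqrt_sub_one_le_sqrt_div_sub_one {y : ℝ} (hy : 1 < y) :
    (√(y - 1))⁻¹ ≤ √(y / (y - 1)) := by
  rw [sqrt_div_sub_one_eq hy, Real.le_sqrt (by positivity) (by positivity)]
  linarith

lemma sqrt_div_sub_one_le {y : ℝ} (hy : 1 < y) : √(y / (y - 1)) ≤ 1 + (√(y - 1))⁻¹ := by
  rw [sqrt_div_sub_one_eq hy, Real.sqrt_le_left (by positivity)]
  nlinarith [show 0 ≤ (√(y - 1))⁻¹ by positivity]

lemma pow_sub_one_le_mul_pow_mul_sub_one {x : ℝ} (hx : 1 ≤ x) (m : ℕ) :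
    x ^ m - 1 ≤ m * x ^ m * (x - 1) := by
  rw [← geom_sum_mul]
  gcongr
  calc ∑ i ∈ Finset.range m, x ^ i ≤ ∑ _i ∈ Finset.range m, x ^ m :=
        Finset.sum_le_sum fun i hi => pow_le_pow_right₀ hx (Finset.mem_range.1 hi).le
    _ = m * x ^ m := by simp

lemma pow_succ_le_schIntegrand {m : ℕ} (hm : 0 < m) {ξ : ℝ} (hξ : 1 < ξ) :
    ξ ^ (m + 1) ≤ schIntegrand m ξ :=
  le_mul_of_one_le_left (by positivity) (one_le_sqrt_div_sub_one (one_lt_pow₀ hξ hm.ne'))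

lemma inv_sqrt_mul_inv_sqrt_le_schIntegrand {m : ℕ} (hm : 0 < m) {ξ r : ℝ} (h1 : 1 < ξ)
    (h2 : ξ ≤ r) : (√(m * r ^ m))⁻¹ * (√(ξ - 1))⁻¹ ≤ schIntegrand m ξ := by
  have hy : 1 < ξ ^ m := one_lt_pow₀ h1 hm.ne'
  have hr : 0 < r := by linarith
  have hpow : ξ ^ m - 1 ≤ m * r ^ m * (ξ - 1) :=
    (pow_sub_one_le_mul_pow_mul_sub_one h1.le m).trans (by gcongr)
  calc (√(m * r ^ m))⁻¹ * (√(ξ - 1))⁻¹ = (√(m * r ^ m * (ξ - 1)))⁻¹ := by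
        rw [Real.sqrt_mul (x := m * r ^ m) (by positivity), mul_inv]
    _ ≤ (√(ξ ^ m - 1))⁻¹ := by gcongr
    _ ≤ √(ξ ^ m / (ξ ^ m - 1)) := inv_sqrt_sub_one_le_sqrt_div_sub_one hy
    _ ≤ schIntegrand m ξ := le_mul_of_one_le_right (Real.sqrt_nonneg _) (one_le_pow₀ h1.le)

lemma schIntegrand_le {m : ℕ} (hm : 0 < m) {ξ r : ℝ} (h1 : 1 < ξ) (h2 : ξ ≤ r) :
    schIntegrand m ξ ≤ ξ ^ (m + 1) + r ^ (m + 1) / √m * (√(ξ - 1))⁻¹ := by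
  have hy : 1 < ξ ^ m := one_lt_pow₀ h1 hm.ne'
  have hbern : m * (ξ - 1) ≤ ξ ^ m - 1 := by
    have := one_add_mul_le_pow (a := ξ - 1) (by linarith) m
    rw [add_sub_cancel] at this
    linarith
  calc schIntegrand m ξ ≤ (1 + (√(ξ ^ m - 1))⁻¹) * ξ ^ (m + 1) := by
        unfold schIntegrand
        gcongr
        exact sqrt_div_sub_one_le hy
    _ ≤ (1 + (√(m * (ξ - 1)))⁻¹) * ξ ^ (m + 1) := by
        gcongr
    _ ≤ ξ ^ (m + 1) + r ^ (m + 1) / √m * (√(ξ - 1))⁻¹ := by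
        rw [Real.sqrt_mul (by positivity), mul_inv, add_mul, one_mul, div_eq_mul_inv]
        have hpow : ξ ^ (m + 1) ≤ r ^ (m + 1) := by gcongr
        have hc : 0 ≤ (√m)⁻¹ * (√(ξ - 1))⁻¹ := by positivity
        linarith [mul_le_mul_of_nonneg_right hpow hc]

lemma measurable_schIntegrand (m : ℕ) : Measurable (schIntegrand m) := by
  unfold schIntegrand; fun_prop

lemma intervalIntegrable_schIntegrand {m : ℕ} (hm : 0 < m) {r : ℝ} (hr : 1 ≤ r) :
    IntervalIntegrable (schIntegrand m) volume 1 r := by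
  have hg : IntervalIntegrable (fun ξ => ξ ^ (m + 1) + r ^ (m + 1) / √m * (√(ξ - 1))⁻¹)
      volume 1 r :=
    (continuous_pow _).intervalIntegrable _ _ |>.add
      ((intervalIntegrable_inv_sqrt_sub hr).const_mul _)
  refine hg.mono_fun (measurable_schIntegrand m).aestronglyMeasurable ?_
  rw [uIoc_of_le hr]
  refine (ae_restrict_iff' measurableSet_Ioc).2 (Eventually.of_forall fun ξ hξ => ?_)
  have hf := schIntegrand_le hm hξ.1 hξ.2
  have hf0 := (pow_pos (by linarith [hξ.1] : (0:ℝ) < ξ) (m + 1)).le.trans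
    (pow_succ_le_schIntegrand hm hξ.1)
  simpa only [Real.norm_of_nonneg hf0, Real.norm_of_nonneg (hf0.trans hf)] using hf

lemma integral_pow_succ_from_one (m : ℕ) (r : ℝ) :
    ∫ ξ in (1 : ℝ)..r, ξ ^ (m + 1) = (r ^ (m + 2) - 1) / (m + 2) := by
  rw [integral_pow]
  push_cast
  ring_nf

lemma pow_sub_one_div_le_integral_schIntegrand {m : ℕ} (hm : 0 < m) {r : ℝ} (hr : 1 ≤ r) :
    (r ^ (m + 2) - 1) / (m + 2) ≤ ∫ ξ in (1 : ℝ)..r, schIntegrand m ξ := by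
  rw [← integral_pow_succ_from_one]
  exact intervalIntegral.integral_mono_on_of_le_Ioo hr ((continuous_pow _).intervalIntegrable _ _)
    (intervalIntegrable_schIntegrand hm hr) fun ξ hξ => pow_succ_le_schIntegrand hm hξ.1

lemma mul_sqrt_le_integral_schIntegrand {m : ℕ} (hm : 0 < m) {r : ℝ} (hr : 1 ≤ r) :
    (√(m * r ^ m))⁻¹ * (2 * √(r - 1)) ≤ ∫ ξ in (1 : ℝ)..r, schIntegrand m ξ := by
  rw [← integral_inv_sqrt_sub hr, ← intervalIntegral.integral_const_mul]
  exact intervalIntegral.integral_mono_on_of_le_Ioo hr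
    ((intervalIntegrable_inv_sqrt_sub hr).const_mul _) (intervalIntegrable_schIntegrand hm hr)
    fun ξ hξ => inv_sqrt_mul_inv_sqrt_le_schIntegrand hm hξ.1 hξ.2.le

lemma integral_schIntegrand_le {m : ℕ} (hm : 0 < m) {r : ℝ} (hr : 1 ≤ r) :
    ∫ ξ in (1 : ℝ)..r, schIntegrand m ξ ≤
      (r ^ (m + 2) - 1) / (m + 2) + r ^ (m + 1) / √m * (2 * √(r - 1)) := by
  have hp : IntervalIntegrable (fun ξ : ℝ => ξ ^ (m + 1)) volume 1 r :=
    (continuous_pow _).intervalIntegrable _ _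
  have hk := (intervalIntegrable_inv_sqrt_sub hr).const_mul (r ^ (m + 1) / √m)
  rw [← integral_pow_succ_from_one, ← integral_inv_sqrt_sub hr,
    ← intervalIntegral.integral_const_mul, ← intervalIntegral.integral_add hp hk]
  exact intervalIntegral.integral_mono_on_of_le_Ioo hr (intervalIntegrable_schIntegrand hm hr)
    (hp.add hk) fun ξ hξ => schIntegrand_le hm hξ.1 hξ.2.le

lemma tendsto_integral_schIntegrand_div_sqrt {m : ℕ} (hm : 0 < m) :
    Tendsto (fun r => (∫ ξ in (1 : ℝ)..r, schIntegrand m ξ) / √(r - 1)) (𝓝[>] 1)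
      (𝓝 (2 / √m)) := by
  have hm' : (0 : ℝ) < m := by exact_mod_cast hm
  have hlow : Tendsto (fun r : ℝ => 2 * (√(m * r ^ m))⁻¹) (𝓝[>] 1) (𝓝 (2 / √m)) := by
    have : ContinuousAt (fun r : ℝ => 2 * (√(m * r ^ m))⁻¹) 1 := by
      fun_prop (disch := simp [hm'.ne'])
    simpa [div_eq_mul_inv] using this.tendsto.mono_left nhdsWithin_le_nhds
  have hup : Tendsto (fun r : ℝ => r ^ (m + 2) * √(r - 1) + r ^ (m + 1) / √m * 2) (𝓝[>] 1)
      (𝓝 (2 / √m)) := by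
    have : Continuous fun r : ℝ => r ^ (m + 2) * √(r - 1) + r ^ (m + 1) / √m * 2 := by fun_prop
    simpa [div_eq_mul_inv, mul_comm] using (this.tendsto 1).mono_left nhdsWithin_le_nhds
  refine tendsto_of_tendsto_of_tendsto_of_le_of_le' hlow hup ?_ ?_
  · filter_upwards [self_mem_nhdsWithin] with r (hr : 1 < r)
    rw [le_div_iff₀ (Real.sqrt_pos.2 (by linarith))]
    linarith [mul_sqrt_le_integral_schIntegrand hm hr.le]
  · filter_upwards [self_mem_nhdsWithin] with r (hr : 1 < r)
    rw [div_le_iff₀ (Real.sqrt_pos.2 (by linarith))]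
    have hpow : (r ^ (m + 2) - 1) / (m + 2) ≤ r ^ (m + 2) * (r - 1) := by
      have := pow_sub_one_le_mul_pow_mul_sub_one hr.le (m + 2)
      rw [div_le_iff₀ (by positivity)]
      push_cast at this
      linarith
    have hsq : r - 1 = √(r - 1) * √(r - 1) := (Real.mul_self_sqrt (by linarith)).symm
    linear_combination integral_schIntegrand_le hm hr.le + hpow + r ^ (m + 2) * hsq

lemma tendsto_integral_schIntegrand_div_pow {m : ℕ} (hm : 0 < m) :
    Tendsto (fun r => (∫ ξ in (1 : ℝ)..r, schIntegrand m ξ) / r ^ (m + 2)) atTop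
      (𝓝 (1 / (m + 2))) := by
  have hlow : Tendsto (fun r : ℝ => (1 - (r ^ (m + 2))⁻¹) / (m + 2)) atTop (𝓝 (1 / (m + 2))) := by
    simpa using ((tendsto_pow_atTop (by omega)).inv_tendsto_atTop.const_sub 1).div_const
      ((m : ℝ) + 2)
  have hup : Tendsto (fun r : ℝ => 1 / (m + 2) + 2 / √m * (√r)⁻¹) atTop (𝓝 (1 / (m + 2))) := by
    simpa using ((tendsto_inv_atTop_zero.comp Real.tendsto_sqrt_atTop).const_mul
      (2 / √m)).const_add (1 / ((m : ℝ) + 2))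
  refine tendsto_of_tendsto_of_tendsto_of_le_of_le' hlow hup ?_ ?_
  · filter_upwards [eventually_ge_atTop 1] with r hr
    rw [le_div_iff₀ (by positivity)]
    have hr0 : r ≠ 0 := by positivity
    calc (1 - (r ^ (m + 2))⁻¹) / (m + 2) * r ^ (m + 2) = (r ^ (m + 2) - 1) / (m + 2) := by
          field_simp
      _ ≤ _ := pow_sub_one_div_le_integral_schIntegrand hm hr
  · filter_upwards [eventually_ge_atTop 1] with r hr
    rw [div_le_iff₀ (by positivity)]
    have hsqrt : r ^ (m + 1) * √(r - 1) ≤ r ^ (m + 2) * (√r)⁻¹ := by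
      rw [pow_succ _ (m + 1), mul_assoc, ← div_eq_mul_inv, Real.div_sqrt]
      gcongr
      linarith
    calc ∫ ξ in (1 : ℝ)..r, schIntegrand m ξ
        ≤ (r ^ (m + 2) - 1) / (m + 2) + r ^ (m + 1) / √m * (2 * √(r - 1)) :=
          integral_schIntegrand_le hm hr
      _ ≤ r ^ (m + 2) / (m + 2) + 2 / √m * (r ^ (m + 2) * (√r)⁻¹) := by
          rw [show r ^ (m + 1) / √m * (2 * √(r - 1)) = 2 / √m * (r ^ (m + 1) * √(r - 1)) by ring]
          gcongr
          linarith
      _ = (1 / (m + 2) + 2 / √m * (√r)⁻¹) * r ^ (m + 2) := by ring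

/-- `s(r) = (2/√(n−2)) √(r−1) + o(√(r−1))` as `r → 1⁺`,
and `s(r)/r → 1/n` as `r → ∞`. -/
theorem schS_asymptotics (n : ℕ) (hn : 3 ≤ n) :
    Filter.Tendsto
      (fun r : ℝ =>
        (schS n r - 2 / Real.sqrt ((n : ℝ) - 2) * Real.sqrt (r - 1)) / Real.sqrt (r - 1))
      (nhdsWithin 1 (Set.Ioi 1)) (nhds 0) ∧
    Filter.Tendsto (fun r : ℝ => schS n r / r) Filter.atTop (nhds (1 / (n : ℝ))) := by
  obtain ⟨m, rfl⟩ : ∃ m, n = m + 2 := ⟨n - 2, by omega⟩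
  have hm : 0 < m := by omega
  have hcast : ((m + 2 : ℕ) : ℝ) - 2 = m := by push_cast; ring
  refine ⟨?_, ?_⟩
  · have hpow : Tendsto (fun r : ℝ => r ^ (m + 1)) (𝓝[>] 1) (𝓝 1) :=
      ((continuous_pow (m + 1)).tendsto' 1 1 (one_pow _)).mono_left nhdsWithin_le_nhds
    have hlim := ((tendsto_integral_schIntegrand_div_sqrt hm).div hpow one_ne_zero).sub_const
      (2 / √m)
    rw [div_one, sub_self] at hlim
    refine hlim.congr' ?_
    filter_upwards [self_mem_nhdsWithin] with r (hr : 1 < r)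
    have hs : √(r - 1) ≠ 0 := (Real.sqrt_pos.2 (by linarith)).ne'
    rw [hcast, schS_add_two, Pi.div_apply]
    field_simp
  · convert tendsto_integral_schIntegrand_div_pow hm using 2 with r
    · rw [schS_add_two, div_div, ← pow_succ]
    · push_cast
      ring
end

section
/- Let n ≥ 3 be an integer, A ∈ ℝ, B > 0, and define the radial function g : (1,∞) → ℝ by g(r) = A·exp(−B ∫₁^r s(ξ) √(ξ^{n−2}/(ξ^{n−2}−1)) dξ). Then g satisfies the admissibility condition g(r)² rⁿ → 0 as r → ∞ and attains equality in the Schwarzschild Heisenberg inequality: (1/2) ∫₁^∞ g(r)² r^{n−1} √(r^{n−2}/(r^{n−2}−1)) dr = (∫₁^∞ s(r)² g(r)² r^{n−1} √(r^{n−2}/(r^{n−2}−1)) dr)^{1/2} · (∫₁^∞ g'(r)² r^{n−1} √((r^{n−2}−1)/r^{n−2}) dr)^{1/2}. In particular the constant 1/2 is sharp. -/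
open MeasureTheory Filter

/-!
Write `W(r) = √(r^(n-2)/(r^(n-2)-1))`, `F(r) = ∫₁^r t^(n-1) W(t) dt = r^(n-1) s(r)` and
`Φ(r) = ∫₁^r s W`, so that `g = A e^(-BΦ)` and `g' = -B s W g`. Then
`(g² F)' = g² r^(n-1) W - 2B s² g² r^(n-1) W`, and as `g² F` vanishes at `1` and at `∞`,
`∫ g² r^(n-1) W = 2B ∫ s² g² r^(n-1) W`, while `∫ g'² r^(n-1) / W = B² ∫ s² g² r^(n-1) W`:
`g'` is proportional to `s W g`, the equality case of Cauchy–Schwarz.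
The analysis rests on `W ≥ 1`, which gives `s(r) ≥ (r-1)/n`, hence `Φ(r) ≥ (r-1)²/(2n)`: `g²` decays
like a Gaussian, which beats `s(r) = O(r)`, and the horizon singularity `W(r) = O((r-1)^(-1/2))`
is integrable.
-/
open Set Topology intervalIntegral Real

noncomputable def schW (n : ℕ) (r : ℝ) : ℝ := √(r ^ (n - 2) / (r ^ (n - 2) - 1))

lemma sqrt_eq_schW (n : ℕ) (r : ℝ) : √(r ^ (n - 2) / (r ^ (n - 2) - 1)) = schW n r := rfl

lemma schW_nonneg (n : ℕ) (r : ℝ) : 0 ≤ schW n r := sqrt_nonneg _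

lemma measurable_schW (n : ℕ) : Measurable (schW n) := by
  unfold schW; fun_prop

section Weight

variable {n : ℕ}

lemma one_le_schW (hn : 3 ≤ n) {r : ℝ} (hr : 1 < r) : 1 ≤ schW n r := by
  have : 1 < r ^ (n - 2) := one_lt_pow₀ hr (by omega)
  exact one_le_sqrt.2 ((one_le_div (by linarith)).2 (by linarith))

lemma schW_le_sqrt_div (hn : 3 ≤ n) {r : ℝ} (hr : 1 < r) : schW n r ≤ √(r / (r - 1)) := by
  have : r ≤ r ^ (n - 2) := le_self_pow₀ hr.le (by omega)
  apply sqrt_le_sqrt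
  rw [div_le_div_iff₀ (by linarith) (by linarith)]
  nlinarith

lemma schW_le_sqrt_two (hn : 3 ≤ n) {r : ℝ} (hr : 2 ≤ r) : schW n r ≤ √2 :=
  (schW_le_sqrt_div hn (by linarith)).trans
    (sqrt_le_sqrt ((div_le_iff₀ (by linarith)).2 (by linarith)))

lemma schW_le_sqrt_two_mul_rpow (hn : 3 ≤ n) {r : ℝ} (hr : 1 < r) (hr₂ : r ≤ 2) :
    schW n r ≤ √2 * (r - 1) ^ (-(1 / 2) : ℝ) := by
  have h : 0 < r - 1 := by linarith
  calc schW n r ≤ √(r / (r - 1)) := schW_le_sqrt_div hn hr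
    _ ≤ √(2 / (r - 1)) := sqrt_le_sqrt (div_le_div_of_nonneg_right hr₂ h.le)
    _ = √2 * (r - 1) ^ (-(1 / 2) : ℝ) := by
      rw [sqrt_div' _ h.le, div_eq_mul_inv, rpow_neg h.le, ← sqrt_eq_rpow]

lemma continuousOn_schW (hn : 3 ≤ n) : ContinuousOn (schW n) (Ioi 1) := by
  intro r hr
  have : 1 < r ^ (n - 2) := one_lt_pow₀ hr (by omega)
  exact (ContinuousAt.sqrt ((continuousAt_id.pow _).div ((continuousAt_id.pow _).sub
    continuousAt_const) (by simp; linarith))).continuousWithinAt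

lemma integrableOn_schW_Ioc (hn : 3 ≤ n) : IntegrableOn (schW n) (Ioc 1 2) := by
  have hrpow : IntegrableOn (fun r : ℝ => (r - 1) ^ (-(1 / 2) : ℝ)) (Ioc 1 2) := by
    have := (intervalIntegral.intervalIntegrable_rpow' (a := 0) (b := 1)
      (r := -(1 / 2)) (by norm_num)).comp_sub_right 1
    norm_num at this
    exact (intervalIntegrable_iff_integrableOn_Ioc_of_le one_le_two).1 this
  refine (hrpow.const_mul √2).mono' (measurable_schW n).aestronglyMeasurable ?_
  filter_upwards [ae_restrict_mem measurableSet_Ioc] with r hr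
  rw [norm_of_nonneg (schW_nonneg n r)]
  exact schW_le_sqrt_two_mul_rpow hn hr.1 hr.2

lemma integrableOn_mul_schW (hn : 3 ≤ n) {φ : ℝ → ℝ} {s : Set ℝ}
    (hφc : ContinuousOn φ (Icc 1 2)) (hs : s ⊆ Ioi 1) (hφ : IntegrableOn φ s) :
    IntegrableOn (fun t => φ t * schW n t) s := by
  obtain ⟨M, hM⟩ := isCompact_Icc.exists_bound_of_continuousOn hφc
  have near : IntegrableOn (fun t => φ t * schW n t) (Ioc 1 2) :=
    (integrableOn_schW_Ioc hn).bdd_mul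
      ((hφc.mono Ioc_subset_Icc_self).aestronglyMeasurable measurableSet_Ioc)
      (ae_restrict_of_forall_mem measurableSet_Ioc fun t ht => hM t (Ioc_subset_Icc_self ht))
  have far : IntegrableOn (fun t => φ t * schW n t) (s ∩ Ioi 2) := by
    refine (hφ.mono_set inter_subset_left).mul_bdd (c := √2)
      (measurable_schW n).aestronglyMeasurable ?_
    refine ae_restrict_of_ae_restrict_of_subset inter_subset_right ?_
    filter_upwards [ae_restrict_mem measurableSet_Ioi] with t ht
    rw [norm_of_nonneg (schW_nonneg n t)]
    exact schW_le_sqrt_two hn (le_of_lt ht)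
  refine (near.union far).mono_set fun t ht => ?_
  rcases le_or_gt t 2 with h | h
  · exact Or.inl ⟨hs ht, h⟩
  · exact Or.inr ⟨ht, h⟩

lemma intervalIntegrable_mul_schW (hn : 3 ≤ n) {φ : ℝ → ℝ} (hφ : ContinuousOn φ (Ici 1))
    {r : ℝ} (hr : 1 ≤ r) : IntervalIntegrable (fun t => φ t * schW n t) volume 1 r := by
  rw [intervalIntegrable_iff_integrableOn_Ioc_of_le hr]
  exact integrableOn_mul_schW hn (hφ.mono Icc_subset_Ici_self) (fun t ht => ht.1)
    ((hφ.mono Icc_subset_Ici_self).integrableOn_Icc.mono_set Ioc_subset_Icc_self)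

end Weight

lemma continuousOn_primitive_Ici {f : ℝ → ℝ} {a : ℝ}
    (hf : ∀ r, a ≤ r → IntervalIntegrable f volume a r) :
    ContinuousOn (fun r => ∫ t in a..r, f t) (Ici a) := by
  intro r hr
  have hint : IntervalIntegrable f volume (min a a) (max a (r + 1)) := by
    rw [min_self, max_eq_right (by linarith [mem_Ici.1 hr])]
    exact hf _ (by linarith [mem_Ici.1 hr])
  refine (continuousWithinAt_primitive (measure_singleton r) hint).mono_of_mem_nhdsWithin ?_
  rw [← Ici_inter_Iic]
  exact inter_mem_nhdsWithin _ (Iic_mem_nhds (by linarith))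

section Primitives

variable {n : ℕ} {φ : ℝ → ℝ}

lemma continuousOn_integral_mul_schW (hn : 3 ≤ n) (hφ : ContinuousOn φ (Ici 1)) :
    ContinuousOn (fun r => ∫ t in (1 : ℝ)..r, φ t * schW n t) (Ici 1) :=
  continuousOn_primitive_Ici fun _ hr => intervalIntegrable_mul_schW hn hφ hr

lemma hasDerivAt_integral_mul_schW (hn : 3 ≤ n) (hφ : ContinuousOn φ (Ici 1)) {r : ℝ}
    (hr : 1 < r) :
    HasDerivAt (fun u => ∫ t in (1 : ℝ)..u, φ t * schW n t) (φ r * schW n r) r := by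
  have hc : ContinuousOn (fun t => φ t * schW n t) (Ioi 1) :=
    (hφ.mono Ioi_subset_Ici_self).mul (continuousOn_schW hn)
  exact integral_hasDerivAt_right (intervalIntegrable_mul_schW hn hφ hr.le)
    (hc.stronglyMeasurableAtFilter isOpen_Ioi r hr) (hc.continuousAt (Ioi_mem_nhds hr))

end Primitives

noncomputable def schF (n : ℕ) (r : ℝ) : ℝ := ∫ t in (1 : ℝ)..r, t ^ (n - 1) * schW n t

noncomputable def schPhi (n : ℕ) (r : ℝ) : ℝ := ∫ t in (1 : ℝ)..r, schS n t * schW n t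

lemma schS_eq_schF_div (n : ℕ) (r : ℝ) : schS n r = schF n r / r ^ (n - 1) := by
  simp only [schS, schF, schW, mul_comm]

section Distance

variable {n : ℕ} {r : ℝ}

lemma schS_mul_pow (hr : r ≠ 0) : schS n r * r ^ (n - 1) = schF n r := by
  rw [schS_eq_schF_div, div_mul_cancel₀ _ (pow_ne_zero _ hr)]

lemma schF_nonneg (hr : 1 ≤ r) : 0 ≤ schF n r :=
  integral_nonneg hr fun t ht => mul_nonneg (pow_nonneg (by linarith [ht.1]) _) (schW_nonneg n t)

lemma schS_nonneg (hr : 1 ≤ r) : 0 ≤ schS n r := by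
  rw [schS_eq_schF_div]
  exact div_nonneg (schF_nonneg hr) (pow_nonneg (by linarith) _)

lemma continuousOn_schF (hn : 3 ≤ n) : ContinuousOn (schF n) (Ici 1) :=
  continuousOn_integral_mul_schW hn (continuous_pow _).continuousOn

lemma hasDerivAt_schF (hn : 3 ≤ n) (hr : 1 < r) :
    HasDerivAt (schF n) (r ^ (n - 1) * schW n r) r :=
  hasDerivAt_integral_mul_schW hn (continuous_pow _).continuousOn hr

lemma continuousOn_schS (hn : 3 ≤ n) : ContinuousOn (schS n) (Ici 1) := by
  have : schS n = fun r => schF n r / r ^ (n - 1) := funext (schS_eq_schF_div n)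
  rw [this]
  exact (continuousOn_schF hn).div (continuous_pow _).continuousOn
    fun r hr => pow_ne_zero _ (by linarith [mem_Ici.1 hr])

lemma continuousOn_schPhi (hn : 3 ≤ n) : ContinuousOn (schPhi n) (Ici 1) :=
  continuousOn_integral_mul_schW hn (continuousOn_schS hn)

lemma hasDerivAt_schPhi (hn : 3 ≤ n) (hr : 1 < r) :
    HasDerivAt (schPhi n) (schS n r * schW n r) r :=
  hasDerivAt_integral_mul_schW hn (continuousOn_schS hn) hr

lemma schPhi_nonneg (hr : 1 ≤ r) : 0 ≤ schPhi n r :=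
  integral_nonneg hr fun t ht => mul_nonneg (schS_nonneg ht.1) (schW_nonneg n t)

lemma sub_one_div_le_schS (hn : 3 ≤ n) (hr : 1 ≤ r) : (r - 1) / n ≤ schS n r := by
  have hF : (r ^ n - 1) / n ≤ schF n r := by
    have hint : ∫ t in (1 : ℝ)..r, t ^ (n - 1) = (r ^ n - 1) / n := by
      rw [integral_pow, Nat.sub_add_cancel (by omega : 1 ≤ n), Nat.cast_sub (by omega)]
      simp
    rw [← hint]
    refine integral_mono_on_of_le_Ioo hr ((continuous_pow _).intervalIntegrable _ _)
      (intervalIntegrable_mul_schW hn (continuous_pow _).continuousOn hr) fun t ht => ?_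
    exact le_mul_of_one_le_right (pow_nonneg (by linarith [ht.1]) _) (one_le_schW hn ht.1)
  have hpow : 1 ≤ r ^ (n - 1) := one_le_pow₀ hr
  have hn0 : (0 : ℝ) < n := by positivity
  rw [schS_eq_schF_div, le_div_iff₀ (by positivity)]
  refine le_trans ?_ hF
  rw [div_mul_eq_mul_div, div_le_div_iff_of_pos_right hn0, sub_mul, one_mul,
    ← pow_succ', Nat.sub_add_cancel (by omega : 1 ≤ n)]
  linarith

lemma sq_sub_one_div_le_schPhi (hn : 3 ≤ n) (hr : 1 ≤ r) :
    (r - 1) ^ 2 / (2 * n) ≤ schPhi n r := by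
  have hint : ∫ t in (1 : ℝ)..r, (t - 1) / n = (r - 1) ^ 2 / (2 * n) := by
    simp [intervalIntegral.integral_div]
    ring
  rw [← hint]
  refine integral_mono_on_of_le_Ioo hr
    ((by fun_prop : Continuous fun t : ℝ => (t - 1) / n).intervalIntegrable _ _)
    (intervalIntegrable_mul_schW hn (continuousOn_schS hn) hr) fun t ht => ?_
  exact (sub_one_div_le_schS hn ht.1.le).trans
    (le_mul_of_one_le_right (schS_nonneg ht.1.le) (one_le_schW hn ht.1))

lemma integral_schW_le (hn : 3 ≤ n) (hr : 1 ≤ r) :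
    ∫ t in (1 : ℝ)..r, schW n t ≤ (∫ t in (1 : ℝ)..2, schW n t) + √2 * r := by
  have hW : ∀ b, 1 ≤ b → IntervalIntegrable (schW n) volume 1 b := fun b hb => by
    simpa using intervalIntegrable_mul_schW hn (φ := fun _ => 1) continuousOn_const hb
  rcases le_or_gt r 2 with h | h
  · have := integral_mono_interval le_rfl hr h
      (ae_of_all _ fun t => schW_nonneg n t) (hW 2 one_le_two)
    nlinarith [sqrt_nonneg 2]
  · have hW₂ : IntervalIntegrable (schW n) volume 2 r := (hW 2 one_le_two).symm.trans (hW r hr)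
    rw [← integral_add_adjacent_intervals (hW 2 one_le_two) hW₂]
    have : ∫ t in (2 : ℝ)..r, schW n t ≤ ∫ t in (2 : ℝ)..r, √2 :=
      integral_mono_on h.le hW₂ intervalIntegrable_const
        fun t ht => schW_le_sqrt_two hn ht.1
    rw [intervalIntegral.integral_const, smul_eq_mul] at this
    nlinarith [sqrt_nonneg 2]

end Distance

lemma exists_schS_le_mul {n : ℕ} (hn : 3 ≤ n) : ∃ K, ∀ r, 1 ≤ r → schS n r ≤ K * r := by
  set C := ∫ t in (1 : ℝ)..2, schW n t
  have hC : 0 ≤ C := integral_nonneg one_le_two fun t _ => schW_nonneg n t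
  refine ⟨C + √2, fun r hr => ?_⟩
  have hF : schF n r ≤ r ^ (n - 1) * ∫ t in (1 : ℝ)..r, schW n t := by
    rw [← intervalIntegral.integral_const_mul]
    refine integral_mono_on hr (intervalIntegrable_mul_schW hn (continuous_pow _).continuousOn hr)
      (intervalIntegrable_mul_schW hn continuousOn_const hr) fun t ht => ?_
    exact mul_le_mul_of_nonneg_right (pow_le_pow_left₀ (by linarith [ht.1]) ht.2 _)
      (schW_nonneg n t)
  have hpow : 0 < r ^ (n - 1) := by positivity
  rw [schS_eq_schF_div, div_le_iff₀ hpow]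
  calc schF n r ≤ r ^ (n - 1) * (C + √2 * r) :=
        hF.trans (mul_le_mul_of_nonneg_left (integral_schW_le hn hr) hpow.le)
    _ ≤ (C + √2) * r * r ^ (n - 1) := by nlinarith [mul_le_mul_of_nonneg_left hr hC]

lemma tendsto_pow_mul_exp_neg_mul_sq {b : ℝ} (hb : 0 < b) (k : ℕ) :
    Tendsto (fun r : ℝ => r ^ k * exp (-b * r ^ 2)) atTop (𝓝 0) := by
  refine ((tendsto_rpow_abs_mul_exp_neg_mul_sq_cocompact hb k).mono_left
    atTop_le_cocompact).congr' ?_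
  filter_upwards [eventually_ge_atTop 0] with r hr
  rw [abs_of_nonneg hr, rpow_natCast]

section Decay

variable {n : ℕ} {c : ℝ}

lemma exp_neg_mul_schPhi_le (hn : 3 ≤ n) (hc : 0 ≤ c) {r : ℝ} (hr : 1 ≤ r) :
    exp (-c * schPhi n r) ≤ exp (c / (2 * n)) * exp (-(c / (4 * n)) * r ^ 2) := by
  rw [← exp_add, exp_le_exp]
  have hn0 : (0 : ℝ) < n := by positivity
  have h := mul_le_mul_of_nonneg_left (sq_sub_one_div_le_schPhi hn hr) hc
  have : c * ((r ^ 2 - 2) / (4 * n)) ≤ c * ((r - 1) ^ 2 / (2 * n)) := by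
    refine mul_le_mul_of_nonneg_left ?_ hc
    rw [div_le_div_iff₀ (by positivity) (by positivity)]
    nlinarith [sq_nonneg (r - 2)]
  have e : c * ((r ^ 2 - 2) / (4 * n)) = -(c / (2 * n) + -(c / (4 * n)) * r ^ 2) := by
    field_simp; ring
  linarith

lemma tendsto_pow_mul_exp_neg_mul_schPhi (hn : 3 ≤ n) (hc : 0 < c) (k : ℕ) :
    Tendsto (fun r => r ^ k * exp (-c * schPhi n r)) atTop (𝓝 0) := by
  have hb : 0 < c / (4 * n) := by positivity
  have hlim := (tendsto_pow_mul_exp_neg_mul_sq hb k).const_mul (exp (c / (2 * n)))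
  rw [mul_zero] at hlim
  refine tendsto_of_tendsto_of_tendsto_of_le_of_le' tendsto_const_nhds hlim ?_ ?_
  · filter_upwards [eventually_ge_atTop 0] with r hr
    positivity
  · filter_upwards [eventually_ge_atTop 1] with r hr
    calc r ^ k * exp (-c * schPhi n r)
        ≤ r ^ k * (exp (c / (2 * n)) * exp (-(c / (4 * n)) * r ^ 2)) :=
          mul_le_mul_of_nonneg_left (exp_neg_mul_schPhi_le hn hc.le hr) (by positivity)
      _ = _ := by ring

lemma integrableOn_pow_mul_exp_neg_mul_schPhi (hn : 3 ≤ n) (hc : 0 < c) (k : ℕ) :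
    IntegrableOn (fun r => r ^ k * exp (-c * schPhi n r)) (Ioi 1) := by
  have hb : 0 < c / (4 * n) := by positivity
  have hgauss : IntegrableOn (fun r : ℝ => r ^ (k : ℝ) * exp (-(c / (4 * n)) * r ^ 2)) (Ioi 1) :=
    (integrableOn_rpow_mul_exp_neg_mul_sq hb (by linarith [k.cast_nonneg (α := ℝ)])).mono_set
      (Ioi_subset_Ioi zero_le_one)
  refine (hgauss.const_mul (exp (c / (2 * n)))).mono' ?_ ?_
  · refine ContinuousOn.aestronglyMeasurable ?_ measurableSet_Ioi
    exact ((continuous_pow k).continuousOn.mul (continuous_exp.comp_continuousOn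
      ((continuousOn_schPhi hn).const_smul (-c)))).mono Ioi_subset_Ici_self
  · filter_upwards [ae_restrict_mem measurableSet_Ioi] with r hr
    have hr1 : (1 : ℝ) ≤ r := le_of_lt hr
    rw [norm_of_nonneg (by positivity), rpow_natCast]
    calc r ^ k * exp (-c * schPhi n r)
        ≤ r ^ k * (exp (c / (2 * n)) * exp (-(c / (4 * n)) * r ^ 2)) :=
          mul_le_mul_of_nonneg_left (exp_neg_mul_schPhi_le hn hc.le hr1) (by positivity)
      _ = _ := by ring

end Decay

noncomputable def schG (n : ℕ) (A B r : ℝ) : ℝ := A * exp (-B * schPhi n r)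

section Profile

variable {n : ℕ} {A B : ℝ}

lemma schG_sq (r : ℝ) : schG n A B r ^ 2 = A ^ 2 * exp (-(2 * B) * schPhi n r) := by
  rw [schG, mul_pow, ← exp_nat_mul]
  ring_nf

lemma continuousOn_schG (hn : 3 ≤ n) : ContinuousOn (schG n A B) (Ici 1) :=
  continuousOn_const.mul
    (continuous_exp.comp_continuousOn ((continuousOn_schPhi hn).const_smul (-B)))

lemma hasDerivAt_schG (hn : 3 ≤ n) {r : ℝ} (hr : 1 < r) :
    HasDerivAt (schG n A B) (-B * schS n r * schW n r * schG n A B r) r := by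
  refine ((((hasDerivAt_schPhi hn hr).const_mul (-B)).exp).const_mul A).congr_deriv ?_
  rw [schG]
  ring

lemma tendsto_schG_sq_mul_pow (hn : 3 ≤ n) (hB : 0 < B) (k : ℕ) :
    Tendsto (fun r => schG n A B r ^ 2 * r ^ k) atTop (𝓝 0) := by
  have h := (tendsto_pow_mul_exp_neg_mul_schPhi hn (by positivity : 0 < 2 * B) k).const_mul (A ^ 2)
  rw [mul_zero] at h
  refine h.congr fun r => ?_
  rw [schG_sq]
  ring

lemma integrableOn_schG_sq_mul_pow (hn : 3 ≤ n) (hB : 0 < B) (k : ℕ) :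
    IntegrableOn (fun r => schG n A B r ^ 2 * r ^ k) (Ioi 1) := by
  refine IntegrableOn.congr_fun ((integrableOn_pow_mul_exp_neg_mul_schPhi hn
    (by positivity : 0 < 2 * B) k).const_mul (A ^ 2)) (fun r _ => ?_) measurableSet_Ioi
  rw [schG_sq]
  ring

lemma integrableOn_schG_sq_weight (hn : 3 ≤ n) (hB : 0 < B) :
    IntegrableOn (fun r => schG n A B r ^ 2 * r ^ (n - 1) * schW n r) (Ioi 1) :=
  integrableOn_mul_schW hn
    ((((continuousOn_schG hn).pow 2).mul (continuous_pow _).continuousOn).mono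
      Icc_subset_Ici_self) subset_rfl (integrableOn_schG_sq_mul_pow hn hB _)

lemma integrableOn_schS_sq_schG_sq_weight (hn : 3 ≤ n) (hB : 0 < B) :
    IntegrableOn (fun r => schS n r ^ 2 * schG n A B r ^ 2 * r ^ (n - 1) * schW n r) (Ioi 1) := by
  obtain ⟨K, hK⟩ := exists_schS_le_mul hn
  have hcont : ContinuousOn (fun r => schS n r ^ 2 * schG n A B r ^ 2 * r ^ (n - 1)) (Ici 1) :=
    (((continuousOn_schS hn).pow 2).mul ((continuousOn_schG hn).pow 2)).mul
      (continuous_pow _).continuousOn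
  refine integrableOn_mul_schW hn (hcont.mono Icc_subset_Ici_self) subset_rfl ?_
  refine ((integrableOn_schG_sq_mul_pow hn hB (n + 1) (A := A)).const_mul (K ^ 2)).mono'
    ((hcont.mono Ioi_subset_Ici_self).aestronglyMeasurable measurableSet_Ioi) ?_
  filter_upwards [ae_restrict_mem measurableSet_Ioi] with r hr
  have hr0 : 0 ≤ r := by linarith [mem_Ioi.1 hr]
  have hs : schS n r ^ 2 ≤ (K * r) ^ 2 :=
    pow_le_pow_left₀ (schS_nonneg (le_of_lt hr)) (hK r (le_of_lt hr)) 2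
  rw [norm_of_nonneg (by positivity)]
  calc schS n r ^ 2 * schG n A B r ^ 2 * r ^ (n - 1)
      ≤ (K * r) ^ 2 * schG n A B r ^ 2 * r ^ (n - 1) := by gcongr
    _ = K ^ 2 * (schG n A B r ^ 2 * r ^ (n + 1)) := by
      rw [show n + 1 = n - 1 + 2 by omega]
      ring

lemma integral_schG_sq_weight (hn : 3 ≤ n) (hB : 0 < B) :
    ∫ r in Ioi 1, schG n A B r ^ 2 * r ^ (n - 1) * schW n r
      = 2 * B * ∫ r in Ioi 1, schS n r ^ 2 * schG n A B r ^ 2 * r ^ (n - 1) * schW n r := by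
  set f := fun r => schG n A B r ^ 2 * schF n r
  have hderiv : ∀ r ∈ Ioi (1 : ℝ), HasDerivAt f (schG n A B r ^ 2 * r ^ (n - 1) * schW n r
      - 2 * B * (schS n r ^ 2 * schG n A B r ^ 2 * r ^ (n - 1) * schW n r)) r := by
    intro r hr
    refine (((hasDerivAt_schG hn hr).pow 2).mul (hasDerivAt_schF hn hr)).congr_deriv ?_
    rw [Pi.pow_apply, ← schS_mul_pow (by linarith [mem_Ioi.1 hr] : r ≠ 0)]
    ring
  have hlim : Tendsto f atTop (𝓝 0) := by
    obtain ⟨K, hK⟩ := exists_schS_le_mul hn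
    have h := (tendsto_schG_sq_mul_pow hn hB n (A := A)).const_mul K
    rw [mul_zero] at h
    refine tendsto_of_tendsto_of_tendsto_of_le_of_le' tendsto_const_nhds h ?_ ?_
    · filter_upwards [eventually_ge_atTop 1] with r hr
      exact mul_nonneg (sq_nonneg _) (schF_nonneg hr)
    · filter_upwards [eventually_ge_atTop 1] with r hr
      have hr0 : 0 ≤ r := by linarith
      simp only [f]
      rw [← schS_mul_pow (by linarith : r ≠ 0)]
      calc schG n A B r ^ 2 * (schS n r * r ^ (n - 1))
          ≤ schG n A B r ^ 2 * (K * r * r ^ (n - 1)) := by gcongr; exact hK r hr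
        _ = K * (schG n A B r ^ 2 * r ^ n) := by
          rw [mul_assoc K, ← pow_succ', Nat.sub_add_cancel (by omega : 1 ≤ n)]
          ring
  have hibp := integral_Ioi_of_hasDerivAt_of_tendsto
    ((((continuousOn_schG hn).pow 2).mul (continuousOn_schF hn)) 1 self_mem_Ici) hderiv
    ((integrableOn_schG_sq_weight hn hB).sub
      ((integrableOn_schS_sq_schG_sq_weight hn hB).const_mul (2 * B))) hlim
  rw [integral_sub (integrableOn_schG_sq_weight hn hB)
    ((integrableOn_schS_sq_schG_sq_weight hn hB).const_mul (2 * B)),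
    MeasureTheory.integral_const_mul] at hibp
  simp only [Pi.mul_apply, Pi.pow_apply, schF, integral_same, mul_zero, sub_zero] at hibp
  linarith

lemma integral_deriv_schG_sq (hn : 3 ≤ n) :
    ∫ r in Ioi 1, deriv (schG n A B) r ^ 2 * r ^ (n - 1) * √((r ^ (n - 2) - 1) / r ^ (n - 2))
      = B ^ 2 * ∫ r in Ioi 1, schS n r ^ 2 * schG n A B r ^ 2 * r ^ (n - 1) * schW n r := by
  rw [← MeasureTheory.integral_const_mul]
  refine setIntegral_congr_fun measurableSet_Ioi fun r hr => ?_
  have hW : schW n r ≠ 0 := (zero_lt_one.trans_le (one_le_schW hn hr)).ne'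
  have hinv : √((r ^ (n - 2) - 1) / r ^ (n - 2)) = (schW n r)⁻¹ := by
    rw [← inv_div, sqrt_inv, schW]
  rw [(hasDerivAt_schG hn hr).deriv, hinv]
  field_simp

end Profile

/-- the radial function
`g(r) = A exp(−B ∫₁^r s(ξ) √(ξ^(n−2)/(ξ^(n−2)−1)) dξ)` (with `A ∈ ℝ`, `B > 0`) is
admissible (`g(r)² rⁿ → 0` as `r → ∞`) and attains equality in the Schwarzschild Heisenberg
inequality, so the constant `1/2` is sharp. -/
theorem schwarzschild_heisenberg_minimiser (n : ℕ) (hn : 3 ≤ n) (A B : ℝ) (hB : 0 < B)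
    (g : ℝ → ℝ)
    (hg : ∀ r : ℝ, g r
      = A * Real.exp (-B * ∫ ξ in (1 : ℝ)..r,
          schS n ξ * Real.sqrt (ξ ^ (n - 2) / (ξ ^ (n - 2) - 1)))) :
    Filter.Tendsto (fun r : ℝ => g r ^ 2 * r ^ n) Filter.atTop (nhds 0) ∧
    (1 / 2 : ℝ) *
        (∫ r in Set.Ioi (1 : ℝ),
          g r ^ 2 * r ^ (n - 1) * Real.sqrt (r ^ (n - 2) / (r ^ (n - 2) - 1)))
      = Real.sqrt (∫ r in Set.Ioi (1 : ℝ),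
            schS n r ^ 2 * g r ^ 2 * r ^ (n - 1)
              * Real.sqrt (r ^ (n - 2) / (r ^ (n - 2) - 1))) *
        Real.sqrt (∫ r in Set.Ioi (1 : ℝ),
            deriv g r ^ 2 * r ^ (n - 1)
              * Real.sqrt ((r ^ (n - 2) - 1) / r ^ (n - 2))) := by
  obtain rfl : g = schG n A B := funext hg
  refine ⟨tendsto_schG_sq_mul_pow hn hB n, ?_⟩
  have hJ : 0 ≤ ∫ r in Ioi 1, schS n r ^ 2 * schG n A B r ^ 2 * r ^ (n - 1) * schW n r :=
    setIntegral_nonneg measurableSet_Ioi fun r hr =>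
      mul_nonneg (by have := (le_of_lt hr : (1 : ℝ) ≤ r); positivity) (schW_nonneg n r)
  simp only [sqrt_eq_schW]
  rw [integral_schG_sq_weight hn hB, integral_deriv_schG_sq hn, sqrt_mul (sq_nonneg B),
    sqrt_sq hB.le]
  linear_combination (-B) * mul_self_sqrt hJ
end
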